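/- arXiv:1610.00239 — 5 statements merged into one kernel-verified Lean document; each statement's English description precedes it below -/
import Mathlib

section
/- For any centrally symmetric measurable set A in R^n (i.e., A = -A) and any vector x in R^n, the standard Gaussian measure satisfies γ_n(x + A) ≥ e^{-‖x‖²/2} · γ_n(A). -/
open MeasureTheory Real
open scoped InnerProductSpace ENNReal

/-!
Pairing `a` with `-a` (the set is symmetric and Lebesgue measure is invariant under translation
and negation), `γₙ(x + A)` is the integral over `A` of the mean of the Gaussian density at
`x + a` and `x - a`. Since `e^{-‖x ± a‖²/2} = e^{-‖x‖²/2} e^{-‖a‖²/2} e^{∓⟪x, a⟫}` and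
`cosh ≥ 1`, that mean is at least `e^{-‖x‖²/2}` times the density at `a`; this pointwise
symmetrization replaces Jensen's inequality.
-/

/-- The standard Gaussian probability measure on `ℝⁿ`. -/
noncomputable def stdGaussian (n : ℕ) : Measure (EuclideanSpace ℝ (Fin n)) :=
  volume.withDensity (fun y => ENNReal.ofReal ((2 * π) ^ (-(n : ℝ) / 2) * Real.exp (-‖y‖ ^ 2 / 2)))

section Translate

variable {G : Type*} [MeasurableSpace G]

theorem withDensity_image_add_left [AddGroup G] [MeasurableAdd G] (μ : Measure G) [SFinite μ]
    [μ.IsAddLeftInvariant] (f : G → ℝ≥0∞) (x : G) (A : Set G) :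
    μ.withDensity f ((x + ·) '' A) = ∫⁻ a in A, f (x + a) ∂μ := by
  rw [withDensity_apply']
  exact ((measurePreserving_add_left μ x).setLIntegral_comp_emb
    (MeasurableEquiv.addLeft x).measurableEmbedding f A).symm

theorem setLIntegral_comp_neg_of_eq_neg [InvolutiveNeg G] [MeasurableNeg G] (μ : Measure G)
    [μ.IsNegInvariant] (f : G → ℝ≥0∞) {A : Set G} (hA : A = -A) :
    ∫⁻ a in A, f (-a) ∂μ = ∫⁻ a in A, f a ∂μ := by
  rw [(Measure.measurePreserving_neg μ).setLIntegral_comp_emb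
    (MeasurableEquiv.neg G).measurableEmbedding f A, Set.image_neg_eq_neg, ← hA]

theorem two_mul_withDensity_image_add_left_of_eq_neg [AddGroup G] [MeasurableAdd G]
    [MeasurableNeg G] (μ : Measure G) [SFinite μ] [μ.IsAddLeftInvariant] [μ.IsNegInvariant]
    {f : G → ℝ≥0∞} (hf : Measurable f) (x : G) {A : Set G} (hA : A = -A) :
    2 * μ.withDensity f ((x + ·) '' A) = ∫⁻ a in A, (f (x + a) + f (x - a)) ∂μ := by
  have hminus : ∫⁻ a in A, f (x - a) ∂μ = ∫⁻ a in A, f (x + a) ∂μ := by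
    simpa only [sub_eq_add_neg] using
      setLIntegral_comp_neg_of_eq_neg μ (fun a => f (x + a)) hA
  have hf_add : Measurable fun a => f (x + a) := hf.comp (measurable_const_add x)
  rw [lintegral_add_left hf_add, hminus, withDensity_image_add_left, two_mul]

end Translate

section Gaussian

variable {E : Type*} [NormedAddCommGroup E] [InnerProductSpace ℝ E]

theorem two_mul_exp_neg_sq_norm_half_mul_le (x a : E) :
    2 * (exp (-‖x‖ ^ 2 / 2) * exp (-‖a‖ ^ 2 / 2)) ≤
      exp (-‖x + a‖ ^ 2 / 2) + exp (-‖x - a‖ ^ 2 / 2) := by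
  set P := exp (-‖x‖ ^ 2 / 2) * exp (-‖a‖ ^ 2 / 2) with hP
  have hplus : exp (-‖x + a‖ ^ 2 / 2) = P * exp (-⟪x, a⟫_ℝ) := by
    rw [hP, ← exp_add, ← exp_add, norm_add_sq_real]; ring_nf
  have hminus : exp (-‖x - a‖ ^ 2 / 2) = P * exp ⟪x, a⟫_ℝ := by
    rw [hP, ← exp_add, ← exp_add, norm_sub_sq_real]; ring_nf
  calc 2 * P ≤ 2 * (P * cosh ⟪x, a⟫_ℝ) := by
        gcongr
        exact le_mul_of_one_le_right (by positivity) (one_le_cosh _)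
    _ = exp (-‖x + a‖ ^ 2 / 2) + exp (-‖x - a‖ ^ 2 / 2) := by
        rw [hplus, hminus, cosh_eq]; ring

theorem two_mul_ofReal_exp_mul_gaussian_le {c : ℝ} (hc : 0 ≤ c) (x a : E) :
    2 * (ENNReal.ofReal (exp (-‖x‖ ^ 2 / 2)) * ENNReal.ofReal (c * exp (-‖a‖ ^ 2 / 2))) ≤
      ENNReal.ofReal (c * exp (-‖x + a‖ ^ 2 / 2)) +
        ENNReal.ofReal (c * exp (-‖x - a‖ ^ 2 / 2)) := by
  rw [← ENNReal.ofReal_mul (exp_pos _).le, ← ENNReal.ofReal_add (by positivity) (by positivity),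
    ← ENNReal.ofReal_ofNat 2, ← ENNReal.ofReal_mul zero_le_two]
  refine ENNReal.ofReal_le_ofReal ?_
  calc 2 * (exp (-‖x‖ ^ 2 / 2) * (c * exp (-‖a‖ ^ 2 / 2)))
      = c * (2 * (exp (-‖x‖ ^ 2 / 2) * exp (-‖a‖ ^ 2 / 2))) := by ring
    _ ≤ c * (exp (-‖x + a‖ ^ 2 / 2) + exp (-‖x - a‖ ^ 2 / 2)) :=
        mul_le_mul_of_nonneg_left (two_mul_exp_neg_sq_norm_half_mul_le x a) hc
    _ = c * exp (-‖x + a‖ ^ 2 / 2) + c * exp (-‖x - a‖ ^ 2 / 2) := by ring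

variable [MeasurableSpace E] [BorelSpace E]

theorem ofReal_exp_mul_withDensity_gaussian_le_image_add_left (μ : Measure E) [SFinite μ]
    [μ.IsAddLeftInvariant] [μ.IsNegInvariant] {c : ℝ} (hc : 0 ≤ c) (x : E) {A : Set E}
    (hA : A = -A) :
    ENNReal.ofReal (exp (-‖x‖ ^ 2 / 2)) *
        μ.withDensity (fun y => ENNReal.ofReal (c * exp (-‖y‖ ^ 2 / 2))) A ≤
      μ.withDensity (fun y => ENNReal.ofReal (c * exp (-‖y‖ ^ 2 / 2))) ((x + ·) '' A) := by
  set g := fun y : E => ENNReal.ofReal (c * exp (-‖y‖ ^ 2 / 2))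
  have hg : Measurable g := by fun_prop
  rw [← ENNReal.mul_le_mul_iff_right two_ne_zero ENNReal.ofNat_ne_top,
    two_mul_withDensity_image_add_left_of_eq_neg μ hg x hA, withDensity_apply', ← mul_assoc,
    ← lintegral_const_mul' _ _ (by finiteness)]
  refine lintegral_mono fun a => ?_
  rw [mul_assoc]
  exact two_mul_ofReal_exp_mul_gaussian_le hc x a

end Gaussian

theorem stmt_0_general (n : ℕ) (A : Set (EuclideanSpace ℝ (Fin n)))
    (hsymm : A = -A) (x : EuclideanSpace ℝ (Fin n)) :
    ENNReal.ofReal (Real.exp (-‖x‖ ^ 2 / 2)) * stdGaussian n A ≤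
      stdGaussian n ((fun a => x + a) '' A) := by
  exact ofReal_exp_mul_withDensity_gaussian_le_image_add_left volume (by positivity) x hsymm

/-- For any centrally symmetric measurable set `A ⊆ ℝⁿ` and any `x ∈ ℝⁿ`,
`γₙ(x + A) ≥ e^{-‖x‖²/2} γₙ(A)`. -/
theorem stmt_0 (n : ℕ) (A : Set (EuclideanSpace ℝ (Fin n)))
    (hA : MeasurableSet A) (hsymm : A = -A) (x : EuclideanSpace ℝ (Fin n)) :
    ENNReal.ofReal (Real.exp (-‖x‖ ^ 2 / 2)) * stdGaussian n A ≤
      stdGaussian n ((fun a => x + a) '' A) :=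
  stmt_0_general n A hsymm x
end

section
/- Let V be uniformly distributed in the Euclidean ball of radius r > 0 centered at the origin in R^m, and let w ∈ R^m be a fixed vector with ‖w‖ ≤ M. Then for every ε > 0, the probability that |⟨V, w⟩| ≥ ε is at most 2 e^{-ε² m / (2 r² M²)}. -/
/-!
If `‖v‖ = 1` and `t ≥ 0`, a point `x` of the ball of radius `r` with `⟪x, v⟫ ≥ t` lies within
`√(r² - t²)` of `t • v`. Hence each of the two caps `±⟪x, v⟫ ≥ t` has at most `(1 - t²/r²)^(m/2)`
times the volume of the ball, and `1 - a ≤ e^(-a)`. Take `v = w / ‖w‖` and `t = ε / M`.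
-/

open MeasureTheory Real Metric
open scoped InnerProductSpace ENNReal

theorem Real.sqrt_sq_sub_sq_pow_le {r : ℝ} (hr : 0 < r) (t : ℝ) (n : ℕ) :
    √(r ^ 2 - t ^ 2) ^ n ≤ exp (-(t ^ 2 * n) / (2 * r ^ 2)) * r ^ n := by
  have hsq : r ^ 2 - t ^ 2 ≤ (r * exp (-t ^ 2 / (2 * r ^ 2))) ^ 2 := by
    have h := add_one_le_exp (-t ^ 2 / r ^ 2)
    rw [mul_pow, ← exp_nat_mul]
    calc r ^ 2 - t ^ 2 = r ^ 2 * (-t ^ 2 / r ^ 2 + 1) := by field_simp; ring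
      _ ≤ r ^ 2 * exp (-t ^ 2 / r ^ 2) := by gcongr
      _ = _ := by congr 2; field_simp; ring
  calc √(r ^ 2 - t ^ 2) ^ n ≤ (r * exp (-t ^ 2 / (2 * r ^ 2))) ^ n := by
        gcongr
        exact Real.sqrt_le_left (by positivity) |>.mpr hsq
    _ = _ := by rw [mul_pow, ← exp_nat_mul, mul_comm]; congr 2; ring

section
variable {E : Type*} [NormedAddCommGroup E] [InnerProductSpace ℝ E]

theorem dist_le_sqrt_sq_sub_norm_sq_of_norm_sq_le_inner {x u : E} {r : ℝ} (hx : ‖x‖ ≤ r)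
    (hxu : ‖u‖ ^ 2 ≤ ⟪x, u⟫_ℝ) : dist x u ≤ √(r ^ 2 - ‖u‖ ^ 2) := by
  have hx2 : ‖x‖ ^ 2 ≤ r ^ 2 := pow_le_pow_left₀ (norm_nonneg x) hx 2
  refine Real.le_sqrt_of_sq_le ?_
  rw [dist_eq_norm, norm_sub_sq_real]
  linarith

theorem setOf_le_abs_inner_subset_union_closedBall {v : E} (hv : ‖v‖ = 1) {r t : ℝ} (ht : 0 ≤ t) :
    {x : E | ‖x‖ ≤ r ∧ t ≤ |⟪x, v⟫_ℝ|} ⊆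
      closedBall (t • v) √(r ^ 2 - t ^ 2) ∪ closedBall (-(t • v)) √(r ^ 2 - t ^ 2) := by
  have hcap : ∀ y : E, ‖y‖ ≤ r → t ≤ ⟪y, v⟫_ℝ → dist y (t • v) ≤ √(r ^ 2 - t ^ 2) := by
    intro y hy hyv
    have hnorm : ‖t • v‖ = t := by rw [norm_smul, hv, mul_one, Real.norm_of_nonneg ht]
    have hdist := dist_le_sqrt_sq_sub_norm_sq_of_norm_sq_le_inner (u := t • v) hy <| by
      rw [hnorm, real_inner_smul_right, sq]
      exact mul_le_mul_of_nonneg_left hyv ht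
    rwa [hnorm] at hdist
  rintro x ⟨hx, hxv⟩
  rcases le_abs'.mp hxv with hneg | hpos
  · right
    rw [mem_closedBall, ← dist_neg_neg, neg_neg]
    exact hcap (-x) (by rwa [norm_neg]) (by rw [inner_neg_left]; linarith)
  · exact Or.inl (hcap x hx hpos)

variable [FiniteDimensional ℝ E] [MeasurableSpace E] [BorelSpace E]
  (μ : Measure E) [μ.IsAddHaarMeasure]

theorem addHaar_setOf_le_abs_inner_le {v : E} (hv : ‖v‖ = 1) {r t : ℝ} (hr : 0 < r) (ht : 0 ≤ t) :
    μ {x : E | ‖x‖ ≤ r ∧ t ≤ |⟪x, v⟫_ℝ|} ≤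
      ENNReal.ofReal (2 * exp (-(t ^ 2 * Module.finrank ℝ E) / (2 * r ^ 2))) *
        μ (closedBall 0 r) := by
  set s := √(r ^ 2 - t ^ 2)
  set d := Module.finrank ℝ E
  have hball : ∀ u : E, μ (closedBall u s) = ENNReal.ofReal (s ^ d) * μ (closedBall 0 1) :=
    fun u ↦ Measure.addHaar_closedBall' μ u (Real.sqrt_nonneg _)
  calc μ {x : E | ‖x‖ ≤ r ∧ t ≤ |⟪x, v⟫_ℝ|}
      ≤ μ (closedBall (t • v) s) + μ (closedBall (-(t • v)) s) :=
        (measure_mono (setOf_le_abs_inner_subset_union_closedBall hv ht)).trans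
          (measure_union_le _ _)
    _ = ENNReal.ofReal (2 * s ^ d) * μ (closedBall 0 1) := by
        rw [hball, hball, ← two_mul, ← mul_assoc, ENNReal.ofReal_mul zero_le_two,
          ENNReal.ofReal_ofNat]
    _ ≤ ENNReal.ofReal (2 * (exp (-(t ^ 2 * d) / (2 * r ^ 2)) * r ^ d)) *
        μ (closedBall 0 1) := by
        gcongr
        exact Real.sqrt_sq_sub_sq_pow_le hr t d
    _ = _ := by
        rw [Measure.addHaar_closedBall' μ 0 hr.le, ← mul_assoc, ← mul_assoc,
          ← ENNReal.ofReal_mul (by positivity)]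

end

/-- Concentration for a uniform random point `V` in the ball of radius `r` in `ℝᵐ`:
for fixed `w` with `‖w‖ ≤ M`, `P(|⟨V, w⟩| ≥ ε) ≤ 2 e^{-ε² m/(2 r² M²)}`.
The uniform distribution is expressed as the normalized volume ratio. -/
theorem stmt_2 (m : ℕ) (r M ε : ℝ) (hr : 0 < r) (hM : 0 < M) (hε : 0 < ε)
    (w : EuclideanSpace ℝ (Fin m)) (hw : ‖w‖ ≤ M) :
    volume {x : EuclideanSpace ℝ (Fin m) | ‖x‖ ≤ r ∧ ε ≤ abs (⟪x, w⟫_ℝ)} ≤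
      ENNReal.ofReal (2 * Real.exp (-(ε ^ 2 * m) / (2 * r ^ 2 * M ^ 2))) *
        volume (closedBall (0 : EuclideanSpace ℝ (Fin m)) r) := by
  rcases eq_or_ne w 0 with rfl | hw0
  · simp [hε.not_ge]
  have hw_pos : 0 < ‖w‖ := norm_pos_iff.mpr hw0
  have hv : ‖‖w‖⁻¹ • w‖ = 1 := norm_smul_inv_norm hw0
  have hsub : {x : EuclideanSpace ℝ (Fin m) | ‖x‖ ≤ r ∧ ε ≤ |⟪x, w⟫_ℝ|} ⊆
      {x | ‖x‖ ≤ r ∧ ε / M ≤ |⟪x, ‖w‖⁻¹ • w⟫_ℝ|} := by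
    rintro x ⟨hx, hxw⟩
    refine ⟨hx, ?_⟩
    rw [real_inner_smul_right, abs_mul, abs_inv, abs_norm, inv_mul_eq_div]
    exact div_le_div₀ (abs_nonneg _) hxw hw_pos hw
  have hexp : -((ε / M) ^ 2 * m) / (2 * r ^ 2) = -(ε ^ 2 * m) / (2 * r ^ 2 * M ^ 2) := by
    field_simp
  calc _ ≤ _ := measure_mono hsub
    _ ≤ _ := addHaar_setOf_le_abs_inner_le volume hv hr (div_nonneg hε.le hM.le)
    _ = _ := by rw [finrank_euclideanSpace_fin, hexp]
end

section
/- Suppose ε ≥ 2/√n and define t > 0 by the equation ε = √(2 log(2 + n/t))/√t. Then t < n, and (log(2 + ε²n))/(2ε²) ≤ t ≤ (2 log(2 + ε²n))/ε². -/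
open Real

private lemma aux_poly (s w : ℝ) (hs : 2 ≤ s) (_hw : 2 ≤ w)
    (h : s ^ 2 + 8 * s - 10 ≤ 4 * (s - 1) * w) : s ≤ w ^ 2 := by
  have hnn : 0 ≤ s ^ 2 + 8 * s - 10 := by nlinarith
  have h1 : (s ^ 2 + 8 * s - 10) ^ 2 ≤ (4 * (s - 1) * w) ^ 2 := by nlinarith
  have h2 : 16 * s * (s - 1) ^ 2 ≤ (s ^ 2 + 8 * s - 10) ^ 2 := by
    nlinarith [sq_nonneg (s - 2)]
  nlinarith [sq_nonneg (s - 1)]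

set_option maxHeartbeats 1600000 in
/-- If `ε ≥ 2/√n` and `t > 0` satisfies `ε = √(2 log(2 + n/t))/√t`, then `t < n` and
`log(2 + ε²n)/(2ε²) ≤ t ≤ 2 log(2 + ε²n)/ε²`. -/
theorem stmt_10 (n : ℕ) (hn : 1 ≤ n) (ε : ℝ) (hε : 2 / Real.sqrt n ≤ ε)
    (t : ℝ) (ht : 0 < t)
    (heq : ε = Real.sqrt (2 * Real.log (2 + n / t)) / Real.sqrt t) :
    t < n ∧ Real.log (2 + ε ^ 2 * n) / (2 * ε ^ 2) ≤ t ∧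
      t ≤ 2 * Real.log (2 + ε ^ 2 * n) / ε ^ 2 := by
  have hnp : (0:ℝ) < n := by exact_mod_cast hn
  have hsn : 0 < Real.sqrt n := Real.sqrt_pos.2 hnp
  have hεpos : 0 < ε := lt_of_lt_of_le (by positivity) hε
  have hnt0 : 0 < (n:ℝ) / t := div_pos hnp ht
  have hL : 0 < Real.log (2 + (n:ℝ) / t) := Real.log_pos (by linarith)
  have hst : 0 < Real.sqrt t := Real.sqrt_pos.2 ht
  -- key identity
  have hkey : ε ^ 2 * t = 2 * Real.log (2 + (n:ℝ) / t) := by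
    have h1 : ε * Real.sqrt t = Real.sqrt (2 * Real.log (2 + (n:ℝ) / t)) := by
      rw [heq]; field_simp
    have h2 := congrArg (· ^ 2) h1
    simp only [mul_pow] at h2
    rw [Real.sq_sqrt ht.le,
      Real.sq_sqrt (by positivity : (0:ℝ) ≤ 2 * Real.log (2 + (n:ℝ) / t))] at h2
    linarith [h2.le, h2.ge]
  -- ε² n ≥ 4
  have h4 : 4 ≤ ε ^ 2 * n := by
    have h1 : 2 ≤ ε * Real.sqrt n := by
      rw [div_le_iff₀ hsn] at hε; linarith
    have h2 : 4 ≤ (ε * Real.sqrt n) ^ 2 := by nlinarith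
    rwa [mul_pow, Real.sq_sqrt hnp.le] at h2
  -- t < n
  have htn : t < n := by
    by_contra h
    push_neg at h
    have h1 : (n:ℝ) / t ≤ 1 := (div_le_one ht).2 h
    have h2 : Real.log (2 + (n:ℝ) / t) ≤ Real.log 3 :=
      Real.log_le_log (by linarith) (by linarith)
    have h3 : Real.log 3 < 2 := by
      have := Real.log_lt_sub_one_of_pos (by norm_num : (0:ℝ) < 3) (by norm_num)
      linarith
    have h4' : ε ^ 2 * n ≤ ε ^ 2 * t := by nlinarith
    linarith
  have hL'pos : 0 < Real.log (2 + ε ^ 2 * n) := Real.log_pos (by linarith)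
  -- ε² t > 1
  have ht1 : 1 < ε ^ 2 * t := by
    have hlog2 : (1:ℝ)/2 < Real.log 2 := by
      have := Real.log_two_gt_d9; linarith
    have hl : Real.log 2 ≤ Real.log (2 + (n:ℝ) / t) :=
      Real.log_le_log (by norm_num) (by linarith)
    linarith
  -- n/t ≤ ε²n, hence L ≤ L'
  have hnt : (n:ℝ) / t ≤ ε ^ 2 * n := by
    rw [div_le_iff₀ ht]
    nlinarith
  have hLL' : Real.log (2 + (n:ℝ) / t) ≤ Real.log (2 + ε ^ 2 * n) :=
    Real.log_le_log (by linarith) (by linarith)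
  -- upper bound
  have hupper : t ≤ 2 * Real.log (2 + ε ^ 2 * n) / ε ^ 2 := by
    rw [le_div_iff₀ (by positivity)]
    nlinarith
  -- s = √(2+ε²n)
  obtain ⟨s, hsdef⟩ : ∃ s : ℝ, s = Real.sqrt (2 + ε ^ 2 * (n:ℝ)) := ⟨_, rfl⟩
  have hs2 : s ^ 2 = 2 + ε ^ 2 * (n:ℝ) := by
    rw [hsdef]; exact Real.sq_sqrt (by linarith)
  have hs0 : 0 ≤ s := by rw [hsdef]; exact Real.sqrt_nonneg _
  have hsge : 2 ≤ s := by nlinarith [hs0, hs2]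
  -- L' ≤ 2 (s - 1)
  have hL's : Real.log (2 + ε ^ 2 * n) ≤ 2 * (s - 1) := by
    have h1 : Real.log s ≤ s - 1 := Real.log_le_sub_one_of_pos (by linarith)
    have h2 : Real.log (2 + ε ^ 2 * (n:ℝ)) = 2 * Real.log s := by
      rw [← hs2, Real.log_pow]
      push_cast; ring
    linarith
  -- w = 2 + n/t satisfies s ≤ w²
  have hεt4 : ε ^ 2 * t ≤ 4 * (s - 1) := by linarith
  have hq : (n:ℝ) / t * t = n := div_mul_cancel₀ _ ht.ne'
  have key2 : ε ^ 2 * (n:ℝ) ≤ 4 * (s - 1) * ((n:ℝ) / t) := by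
    have h := mul_le_mul_of_nonneg_right hεt4 hnt0.le
    have h' : ε ^ 2 * ((n:ℝ) / t * t) ≤ 4 * (s - 1) * ((n:ℝ) / t) := by
      calc ε ^ 2 * ((n:ℝ) / t * t) = ε ^ 2 * t * ((n:ℝ) / t) := by ring
        _ ≤ 4 * (s - 1) * ((n:ℝ) / t) := h
    rwa [hq] at h'
  have hwineq : s ^ 2 + 8 * s - 10 ≤ 4 * (s - 1) * (2 + (n:ℝ) / t) := by nlinarith
  have hws : s ≤ (2 + (n:ℝ) / t) ^ 2 :=
    aux_poly s _ hsge (by linarith) hwineq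
  -- L' ≤ 4 L
  have hL'4L : Real.log (2 + ε ^ 2 * n) ≤ 4 * Real.log (2 + (n:ℝ) / t) := by
    have h0 := mul_self_le_mul_self (by linarith : (0:ℝ) ≤ s) hws
    have h1 : 2 + ε ^ 2 * (n:ℝ) ≤ (2 + (n:ℝ) / t) ^ 4 := by
      calc 2 + ε ^ 2 * (n:ℝ) = s ^ 2 := hs2.symm
        _ = s * s := by ring
        _ ≤ (2 + (n:ℝ) / t) ^ 2 * ((2 + (n:ℝ) / t) ^ 2) := h0
        _ = (2 + (n:ℝ) / t) ^ 4 := by ring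
    have h2 : Real.log (2 + ε ^ 2 * (n:ℝ)) ≤ Real.log ((2 + (n:ℝ) / t) ^ 4) :=
      Real.log_le_log (by linarith) h1
    rw [Real.log_pow] at h2
    norm_num at h2
    linarith
  refine ⟨htn, ?_, hupper⟩
  rw [div_le_iff₀ (by positivity)]
  linarith
end

section
/- Let a_1, ..., a_n ∈ R^n be vectors of norm at most 1, let ε ≥ 2/√n, and let t satisfy t = 2 log(2 + n/t)/ε². Define K = {x ∈ R^n : |⟨x/√t, a_i⟩| ≤ ε for all i}. Then γ_n(K) ≥ (1 − 2t/(2t+n))^n ≥ e^{-3t}, where γ_n is the standard Gaussian measure on R^n. -/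
open MeasureTheory Real
open scoped InnerProductSpace ENNReal

/-!
Chernoff's bound, with the Gaussian moment generating function
`∫ exp (c ⟪x, w⟫) dγₙ = exp (c² ‖w‖² / 2)`, shows that the slab `{x | |⟪x, θ⟫| ≤ 1}` misses
γₙ-mass at most `2 exp (-1 / (2 ‖θ‖²))`. Writing `K` as the intersection of the slabs with
`θᵢ = aᵢ / (ε √t)`, the defining equation of `t` turns this into `2t / (2t + n)`, and the
Khatri–Šidák inequality multiplies the `n` slab bounds. Finally `(1 + 2t/n)ⁿ ≤ e^{2t}`.
-/

section GaussianIntegral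

variable {V : Type*} [NormedAddCommGroup V] [InnerProductSpace ℝ V] [FiniteDimensional ℝ V]
  [MeasurableSpace V] [BorelSpace V]

theorem integrable_exp_neg_mul_sq_norm_add {b : ℝ} (hb : 0 < b) (c : ℝ) (w : V) :
    Integrable fun v : V => exp (-b * ‖v‖ ^ 2 + c * ⟪w, v⟫_ℝ) := by
  refine (GaussianFourier.integrable_cexp_neg_mul_sq_norm_add (b := (b : ℂ)) (by simpa) (c : ℂ)
    w).norm.congr (.of_forall fun v => ?_)
  simp [Complex.norm_exp, ← Complex.ofReal_pow]

theorem integral_exp_neg_mul_sq_norm_add {b : ℝ} (hb : 0 < b) (c : ℝ) (w : V) :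
    ∫ v : V, exp (-b * ‖v‖ ^ 2 + c * ⟪w, v⟫_ℝ) =
      (π / b) ^ (Module.finrank ℝ V / 2 : ℝ) * exp (c ^ 2 * ‖w‖ ^ 2 / (4 * b)) := by
  have h := GaussianFourier.integral_cexp_neg_mul_sq_norm_add (V := V) (b := (b : ℂ))
    (by simpa) (c : ℂ) w
  apply Complex.ofReal_injective
  rw [← integral_complex_ofReal]
  push_cast [Complex.ofReal_exp, Complex.ofReal_cpow (div_pos pi_pos hb).le]
  exact h

end GaussianIntegral

lemma lintegral_exp_mul_inner_stdGaussian (n : ℕ) (c : ℝ) (w : EuclideanSpace ℝ (Fin n)) :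
    ∫⁻ x, ENNReal.ofReal (exp (c * ⟪x, w⟫_ℝ)) ∂stdGaussian n =
      ENNReal.ofReal (exp (c ^ 2 * ‖w‖ ^ 2 / 2)) := by
  rw [stdGaussian, lintegral_withDensity_eq_lintegral_mul _ (by fun_prop) (by fun_prop)]
  have hpt : ∀ x : EuclideanSpace ℝ (Fin n),
      ENNReal.ofReal ((2 * π) ^ (-(n : ℝ) / 2) * exp (-‖x‖ ^ 2 / 2)) *
        ENNReal.ofReal (exp (c * ⟪x, w⟫_ℝ)) =
      ENNReal.ofReal ((2 * π) ^ (-(n : ℝ) / 2) * exp (-(1 / 2) * ‖x‖ ^ 2 + c * ⟪w, x⟫_ℝ)) := by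
    intro x
    rw [← ENNReal.ofReal_mul (by positivity), mul_assoc, ← exp_add, real_inner_comm]
    ring_nf
  simp only [Pi.mul_apply, hpt]
  rw [← ofReal_integral_eq_lintegral_ofReal
      ((integrable_exp_neg_mul_sq_norm_add one_half_pos c w).const_mul _)
      (.of_forall fun x => by positivity),
    integral_const_mul, integral_exp_neg_mul_sq_norm_add one_half_pos,
    finrank_euclideanSpace_fin, ← mul_assoc, div_div_eq_mul_div, div_one, mul_comm π 2,
    ← rpow_add (by positivity)]
  norm_num [neg_div]

instance (n : ℕ) : IsProbabilityMeasure (stdGaussian n) :=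
  ⟨by simpa using lintegral_exp_mul_inner_stdGaussian n 0 0⟩

lemma stdGaussian_le_inner_le {n : ℕ} {θ : EuclideanSpace ℝ (Fin n)} {r σ : ℝ} (hr : 0 ≤ r)
    (hθ : ‖θ‖ ≤ σ) :
    stdGaussian n {x | r ≤ ⟪x, θ⟫_ℝ} ≤ ENNReal.ofReal (exp (-(r ^ 2 / (2 * σ ^ 2)))) := by
  set l := r / σ ^ 2
  have hl : 0 ≤ l := by positivity
  have hexp : 0 < ENNReal.ofReal (exp (l * r)) := ENNReal.ofReal_pos.2 (exp_pos _)
  calc stdGaussian n {x | r ≤ ⟪x, θ⟫_ℝ}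
      ≤ stdGaussian n
          {x | ENNReal.ofReal (exp (l * r)) ≤ ENNReal.ofReal (exp (l * ⟪x, θ⟫_ℝ))} :=
        measure_mono fun x hx =>
          ENNReal.ofReal_le_ofReal (exp_le_exp.2 (mul_le_mul_of_nonneg_left hx hl))
    _ ≤ (∫⁻ x, ENNReal.ofReal (exp (l * ⟪x, θ⟫_ℝ)) ∂stdGaussian n) /
          ENNReal.ofReal (exp (l * r)) :=
        meas_ge_le_lintegral_div (by fun_prop) hexp.ne' ENNReal.ofReal_ne_top
    _ = ENNReal.ofReal (exp (l ^ 2 * ‖θ‖ ^ 2 / 2 - l * r)) := by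
        rw [lintegral_exp_mul_inner_stdGaussian, ← ENNReal.ofReal_div_of_pos (exp_pos _),
          ← exp_sub]
    _ ≤ ENNReal.ofReal (exp (-(r ^ 2 / (2 * σ ^ 2)))) := by
        refine ENNReal.ofReal_le_ofReal (exp_le_exp.2 ?_)
        have hθσ : ‖θ‖ ^ 2 ≤ σ ^ 2 := pow_le_pow_left₀ (norm_nonneg θ) hθ 2
        rcases eq_or_ne σ 0 with rfl | hσ
        · simp [l]
        · calc l ^ 2 * ‖θ‖ ^ 2 / 2 - l * r ≤ l ^ 2 * σ ^ 2 / 2 - l * r := by gcongr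
            _ = -(r ^ 2 / (2 * σ ^ 2)) := by simp only [l]; field_simp; ring

lemma ofReal_one_sub_le_stdGaussian_abs_inner_le {n : ℕ} {θ : EuclideanSpace ℝ (Fin n)}
    {r σ : ℝ} (hr : 0 ≤ r) (hθ : ‖θ‖ ≤ σ) :
    ENNReal.ofReal (1 - 2 * exp (-(r ^ 2 / (2 * σ ^ 2)))) ≤
      stdGaussian n {x | |⟪x, θ⟫_ℝ| ≤ r} := by
  set S := {x : EuclideanSpace ℝ (Fin n) | |⟪x, θ⟫_ℝ| ≤ r}
  have hS : MeasurableSet S := measurableSet_le (by fun_prop) measurable_const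
  have hSc : Sᶜ ⊆ {x | r ≤ ⟪x, θ⟫_ℝ} ∪ {x | r ≤ ⟪x, -θ⟫_ℝ} := fun x hx => by
    simp only [S, Set.mem_compl_iff, Set.mem_ofPred_eq, not_le, lt_abs] at hx
    rcases hx with h | h
    · exact Or.inl h.le
    · exact Or.inr (show r ≤ ⟪x, -θ⟫_ℝ by rw [inner_neg_right]; exact h.le)
  have htails : stdGaussian n Sᶜ ≤ ENNReal.ofReal (2 * exp (-(r ^ 2 / (2 * σ ^ 2)))) := by
    rw [two_mul, ENNReal.ofReal_add (exp_pos _).le (exp_pos _).le]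
    exact (measure_mono hSc).trans <| (measure_union_le _ _).trans <| add_le_add
      (stdGaussian_le_inner_le hr hθ) (stdGaussian_le_inner_le hr (by rwa [norm_neg]))
  calc ENNReal.ofReal (1 - 2 * exp (-(r ^ 2 / (2 * σ ^ 2))))
      = 1 - ENNReal.ofReal (2 * exp (-(r ^ 2 / (2 * σ ^ 2)))) := by
        rw [ENNReal.ofReal_sub _ (by positivity), ENNReal.ofReal_one]
    _ ≤ 1 - stdGaussian n Sᶜ := tsub_le_tsub_left htails 1
    _ = stdGaussian n S := by
        rw [prob_compl_eq_one_sub hS, ENNReal.sub_sub_cancel ENNReal.one_ne_top prob_le_one]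

lemma abs_inner_inv_smul_le_iff {E : Type*} [NormedAddCommGroup E] [InnerProductSpace ℝ E]
    {x a : E} {c ε : ℝ} (hc : 0 < c) (hε : 0 < ε) :
    |⟪c⁻¹ • x, a⟫_ℝ| ≤ ε ↔ |⟪x, (ε * c)⁻¹ • a⟫_ℝ| ≤ 1 := by
  rw [real_inner_smul_left, real_inner_smul_right, abs_mul, abs_mul, abs_inv, abs_inv,
    abs_of_pos hc, abs_of_pos (mul_pos hε hc), inv_mul_le_iff₀ hc,
    inv_mul_le_iff₀ (mul_pos hε hc), mul_one, mul_comm]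

lemma ne_zero_of_eq_div_sq {t c ε : ℝ} (ht : t ≠ 0) (heq : t = c / ε ^ 2) : ε ≠ 0 := by
  rintro rfl
  simp only [ne_eq, OfNat.ofNat_ne_zero, not_false_eq_true, zero_pow, div_zero] at heq
  exact ht heq

lemma exp_neg_sq_mul_div_two_eq {N t ε : ℝ} (hN : 0 ≤ N) (ht : 0 < t)
    (heq : t = 2 * log (2 + N / t) / ε ^ 2) :
    exp (-(ε ^ 2 * t / 2)) = t / (2 * t + N) := by
  have hε : ε ≠ 0 := ne_zero_of_eq_div_sq ht.ne' heq
  have hlog : ε ^ 2 * t / 2 = log (2 + N / t) := by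
    rw [eq_div_iff (by positivity)] at heq
    linarith
  have hfrac : 2 + N / t = (2 * t + N) / t := by field_simp
  rw [hlog, hfrac, exp_neg, exp_log (by positivity), inv_div]

lemma exp_neg_le_one_sub_div_add_pow {x : ℝ} (hx : 0 ≤ x) (n : ℕ) :
    exp (-x) ≤ (1 - x / (x + n)) ^ n := by
  rcases n.eq_zero_or_pos with rfl | hn
  · simpa using hx
  have hn' : (0 : ℝ) < n := Nat.cast_pos.2 hn
  have hbase : 1 - x / (x + n) = (1 + x / n)⁻¹ := by
    field_simp
    ring
  have hpow : (1 + x / n) ^ n ≤ exp x := by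
    simpa [neg_div] using one_sub_div_pow_le_exp_neg (n := n) (t := -x) (by linarith)
  rw [hbase, inv_pow, exp_neg]
  exact inv_anti₀ (by positivity) hpow

theorem stmt_12_general (n : ℕ) (a : Fin n → EuclideanSpace ℝ (Fin n))
    (ha : ∀ i, ‖a i‖ ≤ 1) (ε : ℝ) (hε : 2 / Real.sqrt n ≤ ε)
    (t : ℝ) (ht : 0 < t) (heq : t = 2 * Real.log (2 + n / t) / ε ^ 2)
    (khatriSidak : ∀ θ : Fin n → EuclideanSpace ℝ (Fin n),
      (∏ i, stdGaussian n {x | |⟪x, θ i⟫_ℝ| ≤ 1}) ≤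
        stdGaussian n (⋂ i, {x | |⟪x, θ i⟫_ℝ| ≤ 1}))
    (K : Set (EuclideanSpace ℝ (Fin n)))
    (hK : K = {x | ∀ i, |⟪(Real.sqrt t)⁻¹ • x, a i⟫_ℝ| ≤ ε}) :
    ENNReal.ofReal ((1 - 2 * t / (2 * t + n)) ^ n) ≤ stdGaussian n K ∧
      Real.exp (-3 * t) ≤ (1 - 2 * t / (2 * t + n)) ^ n := by
  have hε0 : 0 < ε :=
    ((by positivity : (0 : ℝ) ≤ 2 / √n).trans hε).lt_of_ne' (ne_zero_of_eq_div_sq ht.ne' heq)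
  have hst : 0 < √t := sqrt_pos.2 ht
  set θ : Fin n → EuclideanSpace ℝ (Fin n) := fun i => (ε * √t)⁻¹ • a i
  have hKθ : K = ⋂ i, {x | |⟪x, θ i⟫_ℝ| ≤ 1} := by
    ext x
    simp only [hK, Set.mem_iInter, Set.mem_ofPred_eq, abs_inner_inv_smul_le_iff hst hε0, θ]
  have hθ (i : Fin n) : ‖θ i‖ ≤ (ε * √t)⁻¹ := by
    rw [norm_smul, norm_inv, Real.norm_of_nonneg (by positivity)]
    exact mul_le_of_le_one_right (by positivity) (ha i)
  have hslab (i : Fin n) :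
      ENNReal.ofReal (1 - 2 * t / (2 * t + n)) ≤ stdGaussian n {x | |⟪x, θ i⟫_ℝ| ≤ 1} := by
    have hexp : -(1 ^ 2 / (2 * ((ε * √t)⁻¹) ^ 2)) = -(ε ^ 2 * t / 2) := by
      rw [inv_pow, mul_pow, sq_sqrt ht.le]
      field_simp
    convert ofReal_one_sub_le_stdGaussian_abs_inner_le zero_le_one (hθ i) using 2
    rw [hexp, exp_neg_sq_mul_div_two_eq n.cast_nonneg ht heq, mul_div_assoc]
  have hbase : 0 ≤ 1 - 2 * t / (2 * t + n) := by
    rw [sub_nonneg, div_le_one (by positivity)]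
    linarith [(n.cast_nonneg : (0 : ℝ) ≤ n)]
  constructor
  · calc ENNReal.ofReal ((1 - 2 * t / (2 * t + n)) ^ n)
        = ∏ _i : Fin n, ENNReal.ofReal (1 - 2 * t / (2 * t + n)) := by
          rw [ENNReal.ofReal_pow hbase, Finset.prod_const, Finset.card_univ, Fintype.card_fin]
      _ ≤ ∏ i, stdGaussian n {x | |⟪x, θ i⟫_ℝ| ≤ 1} := Finset.prod_le_prod' fun i _ => hslab i
      _ ≤ stdGaussian n K := hKθ ▸ khatriSidak θ
  · calc exp (-3 * t) ≤ exp (-(2 * t)) := exp_le_exp.2 (by linarith)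
      _ ≤ (1 - 2 * t / (2 * t + n)) ^ n := exp_neg_le_one_sub_div_add_pow (by positivity) n

/-- For vectors `a₁, …, aₙ` of norm at most `1` in `ℝⁿ`, `ε ≥ 2/√n`, and
`t = 2 log(2 + n/t)/ε²`, the set `K = {x : |⟨x/√t, aᵢ⟩| ≤ ε ∀i}` satisfies
`γₙ(K) ≥ (1 − 2t/(2t+n))ⁿ ≥ e^{-3t}`.  The Khatri–Šidák lemma is assumed as a
hypothesis. -/
theorem stmt_12 (n : ℕ) (hn : 1 ≤ n) (a : Fin n → EuclideanSpace ℝ (Fin n))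
    (ha : ∀ i, ‖a i‖ ≤ 1) (ε : ℝ) (hε : 2 / Real.sqrt n ≤ ε)
    (t : ℝ) (ht : 0 < t) (heq : t = 2 * Real.log (2 + n / t) / ε ^ 2)
    (khatriSidak : ∀ θ : Fin n → EuclideanSpace ℝ (Fin n),
      (∏ i, stdGaussian n {x | |⟪x, θ i⟫_ℝ| ≤ 1}) ≤
        stdGaussian n (⋂ i, {x | |⟪x, θ i⟫_ℝ| ≤ 1}))
    (K : Set (EuclideanSpace ℝ (Fin n)))
    (hK : K = {x | ∀ i, |⟪(Real.sqrt t)⁻¹ • x, a i⟫_ℝ| ≤ ε}) :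
    ENNReal.ofReal ((1 - 2 * t / (2 * t + n)) ^ n) ≤ stdGaussian n K ∧
      Real.exp (-3 * t) ≤ (1 - 2 * t / (2 * t + n)) ^ n :=
  stmt_12_general n a ha ε hε t ht heq khatriSidak K hK
end

section
/- Let A be a 2n × 2n real matrix such that every entry of A differs from the corresponding entry of the 2n × 2n identity matrix by less than 1/(2√n). Then rank(A) > n. -/
/-!
An orthonormal basis `u₁, …, u_k` of `ker A`, where `k = 2n - rank A`, satisfies
`(A - 1) uᵢ = -uᵢ`, so Bessel's inequality for the rows of `A - 1` gives
`k = ∑ ‖(A - 1) uᵢ‖² ≤ ‖A - 1‖_F²`. The entrywise bound makes `‖A - 1‖_F² < (2n)² / (4n) = n`,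
hence `2n - rank A < n`.
-/

open Module

namespace Matrix

variable {m n : Type*} [Fintype m] [Fintype n] [DecidableEq n]

theorem sum_norm_sq_toEuclideanLin_le {ι : Type*} [Fintype ι] (B : Matrix m n ℝ)
    {u : ι → EuclideanSpace ℝ n} (hu : Orthonormal ℝ u) :
    ∑ i, ‖toEuclideanLin B (u i)‖ ^ 2 ≤ ∑ a, ∑ c, B a c ^ 2 := by
  have hrow (v : EuclideanSpace ℝ n) (a : m) :
      toEuclideanLin B v a = inner ℝ v (WithLp.toLp 2 (B a)) := by
    simp [PiLp.inner_apply, mulVec, dotProduct]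
  have hnorm (a : m) : ‖WithLp.toLp 2 (B a)‖ ^ 2 = ∑ c, B a c ^ 2 := by
    simp [EuclideanSpace.norm_sq_eq]
  calc ∑ i, ‖toEuclideanLin B (u i)‖ ^ 2
      = ∑ a, ∑ i, ‖inner ℝ (u i) (WithLp.toLp 2 (B a))‖ ^ 2 := by
        simp only [EuclideanSpace.norm_sq_eq, hrow]
        exact Finset.sum_comm
    _ ≤ ∑ a, ∑ c, B a c ^ 2 := Finset.sum_le_sum fun a _ =>
        hnorm a ▸ hu.sum_inner_products_le _

theorem finrank_ker_toEuclideanLin_add_rank (A : Matrix m n ℝ) :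
    finrank ℝ (LinearMap.ker (toEuclideanLin A)) + A.rank = Fintype.card n := by
  rw [rank_eq_finrank_range_toLin A (PiLp.basisFun 2 ℝ _) (PiLp.basisFun 2 ℝ _), add_comm]
  exact (LinearMap.finrank_range_add_finrank_ker (toEuclideanLin A)).trans finrank_euclideanSpace

theorem card_le_rank_add_sum_sq_sub_one (A : Matrix n n ℝ) :
    (Fintype.card n : ℝ) ≤ A.rank + ∑ i, ∑ j, (A - 1) i j ^ 2 := by
  set K := LinearMap.ker (toEuclideanLin A)
  set b := stdOrthonormalBasis ℝ K
  have hu : Orthonormal ℝ (K.subtypeₗᵢ ∘ b) := b.orthonormal.comp_linearIsometry _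
  have hunit (i : Fin (finrank ℝ K)) : ‖toEuclideanLin (A - 1) (K.subtypeₗᵢ (b i))‖ ^ 2 = 1 := by
    have hker : toEuclideanLin A (b i) = 0 := (b i).2
    have hnorm : ‖(b i : EuclideanSpace ℝ n)‖ = 1 := hu.1 i
    simp [hker, hnorm]
  have hbessel := sum_norm_sq_toEuclideanLin_le (A - 1) hu
  simp only [Function.comp_apply, hunit, Finset.sum_const, Finset.card_univ, Fintype.card_fin,
    nsmul_eq_mul, mul_one] at hbessel
  have hdim : (finrank ℝ K : ℝ) + A.rank = Fintype.card n := by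
    exact_mod_cast finrank_ker_toEuclideanLin_add_rank A
  linarith

end Matrix

/-- If every entry of a `2n × 2n` real matrix `A` differs from the corresponding entry
of the identity matrix by less than `1/(2√n)`, then `rank(A) > n`. -/
theorem stmt_19 (n : ℕ) (hn : 1 ≤ n) (A : Matrix (Fin (2 * n)) (Fin (2 * n)) ℝ)
    (hA : ∀ i j, |A i j - (1 : Matrix (Fin (2 * n)) (Fin (2 * n)) ℝ) i j| <
      1 / (2 * Real.sqrt n)) :
    n < A.rank := by
  have hn' : (0 : ℝ) < n := by exact_mod_cast hn
  have hentry (i j) : (A - 1) i j ^ 2 < 1 / (4 * n) :=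
    calc (A - 1) i j ^ 2 = |A i j - (1 : Matrix (Fin (2 * n)) (Fin (2 * n)) ℝ) i j| ^ 2 := by
          rw [sq_abs, Matrix.sub_apply]
      _ < (1 / (2 * Real.sqrt n)) ^ 2 := by gcongr; exact hA i j
      _ = 1 / (4 * n) := by rw [div_pow, mul_pow, Real.sq_sqrt hn'.le]; norm_num
  have : Nonempty (Fin (2 * n)) := ⟨⟨0, by omega⟩⟩
  have hsum : ∑ i, ∑ j, (A - 1) i j ^ 2 < n :=
    calc ∑ i, ∑ j, (A - 1) i j ^ 2 < ∑ _i : Fin (2 * n), ∑ _j : Fin (2 * n), 1 / (4 * (n : ℝ)) :=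
          Finset.sum_lt_sum_of_nonempty Finset.univ_nonempty fun i _ =>
            Finset.sum_lt_sum_of_nonempty Finset.univ_nonempty fun j _ => hentry i j
      _ = n := by
          simp only [Finset.sum_const, Finset.card_univ, Fintype.card_fin, nsmul_eq_mul]
          push_cast
          field_simp
          ring
  have hcard := A.card_le_rank_add_sum_sq_sub_one
  rw [Fintype.card_fin, Nat.cast_mul, Nat.cast_ofNat] at hcard
  exact_mod_cast (by linarith : (n : ℝ) < A.rank)
end
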